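/- Let d ≥ 2, N ≥ 0 and 0 ≤ p ≤ d−1 be integers and λ ∈ ℝ^N. Consider on ℝ^{d+N} the electric wall form w_E = e₁ + … + e_p + (1/2)Σ_α λ_α φ_α and the magnetic wall form w_M = e₁ + … + e_{d−p−1} − (1/2)Σ_α λ_α φ_α of a p-form with dilaton couplings λ. Then their squared norms with respect to the wall scalar product are equal: (w_E|w_E) = (w_M|w_M) = p(d−1−p)/(d−1) + |λ|²/4, where |λ|² = Σ_α λ_α². In particular, if 0 < p < d−1 or λ ≠ 0, both walls are timelike, i.e. (w_E|w_E) > 0. -/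

import Mathlib

/-- The wall scalar product on `ℝ^{d+N}` (`d` scale factors, `N` dilatons); a linear
form is represented by its components `(w, w̃)`:
`(w|w') = Σᵢ wᵢw'ᵢ − (1/(d−1))(Σᵢ wᵢ)(Σᵢ w'ᵢ) + Σ_α w̃_α w̃'_α`. -/
noncomputable def wallIPD (d N : ℕ) (w w' : (Fin d → ℝ) × (Fin N → ℝ)) : ℝ :=
  (∑ i, w.1 i * w'.1 i) - (1 / ((d : ℝ) - 1)) * (∑ i, w.1 i) * (∑ i, w'.1 i)
    + ∑ α, w.2 α * w'.2 α

lemma sum_ind (d k : ℕ) (hk : k ≤ d) :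
    ∑ i : Fin d, (if i.val < k then (1:ℝ) else 0) = k := by
  rw [Fin.sum_univ_eq_sum_range (fun i => if i < k then (1:ℝ) else 0),
    Finset.sum_boole]
  congr 1
  have : Finset.filter (fun x => x < k) (Finset.range d) = Finset.range k := by
    ext x; simp; omega
  rw [this, Finset.card_range]

lemma norm_val (d N k : ℕ) (hd : 2 ≤ d) (hk : k ≤ d) (t : Fin N → ℝ) :
    wallIPD d N (fun i => if i.val < k then 1 else 0, t)
      (fun i => if i.val < k then 1 else 0, t)
    = (k : ℝ) * ((d : ℝ) - 1 - k) / ((d : ℝ) - 1) + ∑ α, (t α)^2 := by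
  have h1 : ∀ i : Fin d, (if i.val < k then (1:ℝ) else 0) * (if i.val < k then (1:ℝ) else 0)
      = (if i.val < k then (1:ℝ) else 0) := by intro i; split <;> ring
  have hd1 : (d : ℝ) - 1 ≠ 0 := by
    have : (2:ℝ) ≤ d := by exact_mod_cast hd
    nlinarith
  simp only [wallIPD, h1, sum_ind d k hk]
  have h2 : ∑ α, t α * t α = ∑ α, (t α)^2 := by simp [sq]
  rw [h2]
  field_simp

/-- For `d ≥ 2`, `0 ≤ p ≤ d−1` and dilaton couplings `λ ∈ ℝ^N`, the electric wall form
`w_E = e₁ + … + e_p + (1/2)Σ λ_α φ_α` and the magnetic wall form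
`w_M = e₁ + … + e_{d−p−1} − (1/2)Σ λ_α φ_α` of a `p`-form have equal squared norms,
`(w_E|w_E) = (w_M|w_M) = p(d−1−p)/(d−1) + |λ|²/4`; if `0 < p < d−1` or `λ ≠ 0`,
both walls are timelike, i.e. `(w_E|w_E) > 0`. -/
theorem electric_magnetic_norms (d N p : ℕ) (hd : 2 ≤ d) (hp : p ≤ d - 1)
    (lam : Fin N → ℝ)
    (wE wM : (Fin d → ℝ) × (Fin N → ℝ))
    (hE : wE = (fun i => if i.val < p then 1 else 0, fun α => lam α / 2))
    (hM : wM = (fun i => if i.val < d - p - 1 then 1 else 0, fun α => -lam α / 2)) :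
    wallIPD d N wE wE = wallIPD d N wM wM ∧
    wallIPD d N wE wE = (p : ℝ) * ((d : ℝ) - 1 - p) / ((d : ℝ) - 1)
      + (∑ α, (lam α) ^ 2) / 4 ∧
    ((0 < p ∧ p < d - 1) ∨ lam ≠ 0 → 0 < wallIPD d N wE wE) := by
  subst hE hM
  have hpd : p ≤ d := le_trans hp (Nat.sub_le d 1)
  have hE := norm_val d N p hd hpd (fun α => lam α / 2)
  have hM := norm_val d N (d - p - 1) hd (by omega) (fun α => -lam α / 2)
  have hcast : ((d - p - 1 : ℕ) : ℝ) = (d : ℝ) - p - 1 := by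
    push_cast [Nat.sub_sub]
    rw [Nat.cast_sub (by omega)]
    push_cast; ring
  have hd1 : (0:ℝ) < (d : ℝ) - 1 := by
    have : (2:ℝ) ≤ d := by exact_mod_cast hd
    linarith
  have hsq : ∀ (s : ℝ) , ∑ α, ((fun α => s * lam α) α)^2 = s^2 * ∑ α, (lam α)^2 := by
    intro s; rw [Finset.mul_sum]; congr 1; ext α; ring
  have hsum2 : ∑ α, (lam α / 2)^2 = (∑ α, (lam α)^2) / 4 := by
    rw [Finset.sum_div]; congr 1; ext α; ring
  have hsum3 : ∑ α, (-lam α / 2)^2 = (∑ α, (lam α)^2) / 4 := by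
    rw [Finset.sum_div]; congr 1; ext α; ring
  rw [hsum2] at hE
  rw [hsum3, hcast] at hM
  have hEval : wallIPD d N (fun i => if i.val < p then 1 else 0, fun α => lam α / 2)
      (fun i => if i.val < p then 1 else 0, fun α => lam α / 2)
      = (p : ℝ) * ((d : ℝ) - 1 - p) / ((d : ℝ) - 1) + (∑ α, (lam α)^2) / 4 := hE
  refine ⟨?_, hEval, ?_⟩
  · rw [hE, hM]; field_simp; ring
  · intro h
    rw [hEval]
    have hl : 0 ≤ (∑ α, (lam α)^2) / 4 := by positivity
    have hq : 0 ≤ (p : ℝ) * ((d : ℝ) - 1 - p) / ((d : ℝ) - 1) := by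
      apply div_nonneg _ hd1.le
      have h' : ((p:ℕ):ℝ) ≤ ((d-1:ℕ):ℝ) := by exact_mod_cast hp
      rw [Nat.cast_sub (by omega), Nat.cast_one] at h'
      have : (0:ℝ) ≤ p := Nat.cast_nonneg p
      nlinarith
    rcases h with ⟨h1, h2⟩ | h1
    · have hp' : (0:ℝ) < p := by exact_mod_cast h1
      have hp2 : (p:ℝ) < (d:ℝ) - 1 := by
        have h' : ((p:ℕ):ℝ) < ((d-1:ℕ):ℝ) := by exact_mod_cast h2
        rwa [Nat.cast_sub (by omega), Nat.cast_one] at h'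
      have : 0 < (p : ℝ) * ((d : ℝ) - 1 - p) / ((d : ℝ) - 1) := by
        apply div_pos _ hd1
        nlinarith
      linarith
    · have : 0 < ∑ α, (lam α)^2 := by
        obtain ⟨α, hα⟩ := Function.ne_iff.mp h1
        apply Finset.sum_pos' (fun i _ => sq_nonneg _)
        exact ⟨α, Finset.mem_univ α, lt_of_le_of_ne (sq_nonneg _) (Ne.symm (pow_ne_zero 2 hα))⟩
      linarith
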